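/- For all n ≥ 0, the degenerate Bernoulli number satisfies β_{n,λ} = ∑_{k=0}^{n} (λ^k (1)_{k+1,1/λ} / (k+1)) · S_{2,λ}(n,k), where S_{2,λ}(n,k) are the degenerate Stirling numbers of the second kind. -/

import Mathlib

/-- Degenerate falling factorial `(x)_{n,μ} = ∏_{j=0}^{n-1} (x - jμ)`. -/
noncomputable def dfall (x mu : ℝ) (n : ℕ) : ℝ := ∏ j ∈ Finset.range n, (x - j * mu)

/-- The degenerate exponential `e_λ^x(t) = (1+λt)^{x/λ} = ∑_n (x)_{n,λ} t^n/n!`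
as a formal power series. -/
noncomputable def degExpPS (lam x : ℝ) : PowerSeries ℝ :=
  PowerSeries.mk fun n => dfall x lam n / n.factorial

/-- The truncation `∑_{l=0}^{r-1} (1)_{l,λ} t^l / l!`. -/
noncomputable def truncPoly (lam : ℝ) (r : ℕ) : PowerSeries ℝ :=
  ∑ l ∈ Finset.range r, PowerSeries.C (dfall 1 lam l / l.factorial) * PowerSeries.X ^ l

/-- The `r`-truncated degenerate Stirling numbers of the second kind `S_{2,λ}^{[r]}(n, kr)`,
defined by `(1/k!)(e_λ(t) - ∑_{l<r} (1)_{l,λ} t^l/l!)^k = ∑_n S_{2,λ}^{[r]}(n,kr) t^n/n!`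
(the coefficients below `n = kr` vanish automatically). -/
noncomputable def truncS (lam : ℝ) (r k n : ℕ) : ℝ :=
  n.factorial * ((k.factorial : ℝ)⁻¹ *
    PowerSeries.coeff n ((degExpPS lam 1 - truncPoly lam r) ^ k))

/-- The degenerate Stirling numbers of the second kind `S_{2,λ}(n,k)`, defined by
`(1/k!)(e_λ(t)-1)^k = ∑_{n≥k} S_{2,λ}(n,k) t^n/n!`. -/
noncomputable def S2 (lam : ℝ) (n k : ℕ) : ℝ :=
  n.factorial * ((k.factorial : ℝ)⁻¹ * PowerSeries.coeff n ((degExpPS lam 1 - 1) ^ k))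

open PowerSeries Finset

lemma dfall_zero (x mu : ℝ) : dfall x mu 0 = 1 := by simp [dfall]

lemma dfall_succ (x mu : ℝ) (n : ℕ) : dfall x mu (n + 1) = dfall x mu n * (x - n * mu) := by
  simp [dfall, Finset.prod_range_succ]

lemma descPochhammer_eval_eq_dfall (x : ℝ) (k : ℕ) :
    (descPochhammer ℝ k).eval x = dfall x 1 k := by
  induction k with
  | zero => simp [dfall_zero]
  | succ k ih => rw [descPochhammer_succ_eval, ih, dfall_succ, mul_one]

lemma coeff_degExpPS (lam x : ℝ) (n : ℕ) :
    PowerSeries.coeff n (degExpPS lam x) = dfall x lam n / n.factorial := by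
  simp [degExpPS]

lemma constantCoeff_degExpPS (lam x : ℝ) : PowerSeries.constantCoeff (degExpPS lam x) = 1 := by
  have := coeff_degExpPS lam x 0
  simpa [dfall_zero] using this

lemma coeff_X_mul_derivative (f : PowerSeries ℝ) (n : ℕ) :
    PowerSeries.coeff n (PowerSeries.X * PowerSeries.derivative ℝ f)
      = n * PowerSeries.coeff n f := by
  cases n with
  | zero => simp
  | succ m => rw [PowerSeries.coeff_succ_X_mul, PowerSeries.coeff_derivative]; push_cast; ring

/-- Uniqueness of solutions of the ODE `(1+λX) f' = x f`. -/
lemma ode_unique (lam x : ℝ) (f : PowerSeries ℝ)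
    (hf : (1 + PowerSeries.C lam * PowerSeries.X) * PowerSeries.derivative ℝ f
      = PowerSeries.C x * f) (n : ℕ) :
    PowerSeries.coeff n f = PowerSeries.constantCoeff f * dfall x lam n / n.factorial := by
  induction n with
  | zero => simp [dfall_zero, PowerSeries.coeff_zero_eq_constantCoeff]
  | succ n ih =>
      have h := congrArg (PowerSeries.coeff n) hf
      rw [add_mul, one_mul, mul_assoc, map_add, PowerSeries.coeff_C_mul,
        coeff_X_mul_derivative, PowerSeries.coeff_C_mul, PowerSeries.coeff_derivative, ih] at h
      have hfac : ((n : ℝ) + 1) ≠ 0 := by positivity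
      have : PowerSeries.coeff (n+1) f
          = (x - n * lam) * (PowerSeries.constantCoeff f * dfall x lam n / n.factorial)
            / (n+1) := by
        field_simp at h ⊢
        linarith [h]
      rw [this, dfall_succ]
      rw [Nat.factorial_succ]
      push_cast
      field_simp

/-- The ODE satisfied by `degExpPS`. -/
lemma ode_degExpPS (lam x : ℝ) :
    (1 + PowerSeries.C lam * PowerSeries.X) * PowerSeries.derivative ℝ (degExpPS lam x)
      = PowerSeries.C x * degExpPS lam x := by
  ext n
  rw [add_mul, one_mul, mul_assoc, map_add, PowerSeries.coeff_C_mul, coeff_X_mul_derivative,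
    PowerSeries.coeff_C_mul, PowerSeries.coeff_derivative]
  simp only [coeff_degExpPS]
  rw [dfall_succ]
  have h1 : ((n.factorial : ℝ)) ≠ 0 := Nat.cast_ne_zero.mpr n.factorial_ne_zero
  have h2 : ((n : ℝ) + 1) ≠ 0 := by positivity
  rw [Nat.factorial_succ]
  push_cast
  field_simp
  ring

lemma dfall_zero_left (lam : ℝ) (n : ℕ) : dfall 0 lam n = if n = 0 then 1 else 0 := by
  cases n with
  | zero => simp [dfall_zero]
  | succ m =>
      rw [if_neg (Nat.succ_ne_zero m)]
      refine Finset.prod_eq_zero (Finset.mem_range.mpr (Nat.succ_pos m)) ?_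
      simp

/-- Coefficients of natural powers of the degenerate exponential. -/
lemma coeff_degExpPS_pow (lam : ℝ) (m n : ℕ) :
    PowerSeries.coeff n ((degExpPS lam 1) ^ m) = dfall (m : ℝ) lam n / n.factorial := by
  cases m with
  | zero =>
      rw [pow_zero, Nat.cast_zero, dfall_zero_left, PowerSeries.coeff_one]
      split <;> simp_all
  | succ m =>
      have ode1 := ode_degExpPS lam 1
      rw [map_one, one_mul] at ode1
      have ode : (1 + PowerSeries.C lam * PowerSeries.X)
          * PowerSeries.derivative ℝ ((degExpPS lam 1) ^ (m+1))
          = PowerSeries.C ((m+1 : ℕ) : ℝ) * (degExpPS lam 1) ^ (m+1) := by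
        rw [Derivation.leibniz_pow]
        simp only [smul_eq_mul, Nat.add_sub_cancel]
        rw [show (1 + PowerSeries.C lam * PowerSeries.X) *
            ((m+1) • ((degExpPS lam 1) ^ m * PowerSeries.derivative ℝ (degExpPS lam 1)))
            = (m+1) • ((degExpPS lam 1) ^ m *
              ((1 + PowerSeries.C lam * PowerSeries.X)
                * PowerSeries.derivative ℝ (degExpPS lam 1))) by
          rw [mul_smul_comm]; ring_nf]
        rw [ode1, ← pow_succ, nsmul_eq_mul, map_natCast]
      have hthis := ode_unique lam ((m+1 : ℕ) : ℝ) _ ode n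
      have hc : PowerSeries.constantCoeff ((degExpPS lam 1) ^ (m+1)) = 1 := by
        rw [map_pow, constantCoeff_degExpPS, one_pow]
      rwa [hc, one_mul] at hthis

/-- Vanishing of low coefficients of powers of `e_λ - 1`. -/
lemma coeff_E_pow_eq_zero (lam : ℝ) : ∀ k n : ℕ, n < k →
    PowerSeries.coeff n ((degExpPS lam 1 - 1) ^ k) = 0 := by
  intro k
  induction k with
  | zero => intro n hn; exact absurd hn (Nat.not_lt_zero n)
  | succ k ih =>
      intro n hn
      rw [pow_succ']
      rw [PowerSeries.coeff_mul]
      refine Finset.sum_eq_zero fun p hp => ?_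
      rw [Finset.HasAntidiagonal.mem_antidiagonal] at hp
      rcases Nat.eq_zero_or_pos p.1 with h1 | h1
      · have : PowerSeries.coeff p.1 (degExpPS lam 1 - 1) = 0 := by
          rw [h1]
          simp [PowerSeries.coeff_zero_eq_constantCoeff, constantCoeff_degExpPS]
        rw [this, zero_mul]
      · have : p.2 < k := by omega
        rw [ih p.2 this, mul_zero]

/-- Binomial expansion of `e^m = (1+(e-1))^m` at coefficient `n`. -/
lemma coeff_pow_eq_choose_sum (lam : ℝ) (m n : ℕ) :
    PowerSeries.coeff n ((degExpPS lam 1) ^ m)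
      = ∑ k ∈ Finset.range (n+1),
          (m.choose k : ℝ) * PowerSeries.coeff n ((degExpPS lam 1 - 1) ^ k) := by
  have hsplit : (degExpPS lam 1) ^ m = ((degExpPS lam 1 - 1) + 1) ^ m := by ring_nf
  rw [hsplit, add_pow]
  rw [map_sum]
  have hterm : ∀ k, PowerSeries.coeff n
      ((degExpPS lam 1 - 1) ^ k * 1 ^ (m - k) * (m.choose k : ℝ⟦X⟧))
      = (m.choose k : ℝ) * PowerSeries.coeff n ((degExpPS lam 1 - 1) ^ k) := by
    intro k
    rw [one_pow, mul_one, ← map_natCast (PowerSeries.C (R := ℝ)), PowerSeries.coeff_mul_C, mul_comm]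
  simp only [hterm]
  -- extend both sums to range (m + n + 1)
  rw [show ∑ k ∈ Finset.range (m+1),
        (m.choose k : ℝ) * PowerSeries.coeff n ((degExpPS lam 1 - 1) ^ k)
      = ∑ k ∈ Finset.range (m+n+1),
        (m.choose k : ℝ) * PowerSeries.coeff n ((degExpPS lam 1 - 1) ^ k) from
    Finset.sum_subset (by intro x hx; simp at hx ⊢; omega) (by
      intro k _ hk
      simp only [Finset.mem_range, not_lt] at hk
      rw [Nat.choose_eq_zero_of_lt (by omega), Nat.cast_zero, zero_mul])]
  refine (Finset.sum_subset (by intro x hx; simp at hx ⊢; omega) ?_).symm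
  intro k _ hk
  simp only [Finset.mem_range, not_lt] at hk
  rw [coeff_E_pow_eq_zero lam k n (by omega), mul_zero]

/-- The key identity, extended from natural `x` to all real `x` by polynomial interpolation. -/
lemma star (lam : ℝ) (n : ℕ) (x : ℝ) :
    dfall x lam n = (n.factorial : ℝ) * ∑ k ∈ Finset.range (n+1),
      ((k.factorial : ℝ)⁻¹ * PowerSeries.coeff n ((degExpPS lam 1 - 1) ^ k)) * dfall x 1 k := by
  set P : Polynomial ℝ := ∏ j ∈ Finset.range n, (Polynomial.X - Polynomial.C ((j : ℝ) * lam))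
    with hPdef
  set Q : Polynomial ℝ := Polynomial.C (n.factorial : ℝ) * ∑ k ∈ Finset.range (n+1),
      Polynomial.C ((k.factorial : ℝ)⁻¹ * PowerSeries.coeff n ((degExpPS lam 1 - 1) ^ k))
        * descPochhammer ℝ k with hQdef
  have hP : ∀ y : ℝ, P.eval y = dfall y lam n := by
    intro y; simp [hPdef, dfall, Polynomial.eval_prod]
  have hQ : ∀ y : ℝ, Q.eval y = (n.factorial : ℝ) * ∑ k ∈ Finset.range (n+1),
      ((k.factorial : ℝ)⁻¹ * PowerSeries.coeff n ((degExpPS lam 1 - 1) ^ k))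
        * (descPochhammer ℝ k).eval y := by
    intro y; simp [hQdef, Polynomial.eval_finset_sum]
  have key : P = Q := by
    apply Polynomial.eq_of_infinite_eval_eq
    refine Set.Infinite.mono ?_ (Set.infinite_range_of_injective Nat.cast_injective)
    rintro y ⟨m, rfl⟩
    show P.eval _ = Q.eval _
    rw [hP, hQ]
    have h1 : dfall ((m : ℕ) : ℝ) lam n / n.factorial
        = ∑ k ∈ Finset.range (n+1),
            (m.choose k : ℝ) * PowerSeries.coeff n ((degExpPS lam 1 - 1) ^ k) := by
      rw [← coeff_degExpPS_pow lam m n, coeff_pow_eq_choose_sum]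
    have h2 : ∀ k, ((k.factorial : ℝ)⁻¹
          * PowerSeries.coeff n ((degExpPS lam 1 - 1) ^ k))
          * (descPochhammer ℝ k).eval ((m : ℕ) : ℝ)
        = (m.choose k : ℝ) * PowerSeries.coeff n ((degExpPS lam 1 - 1) ^ k) := by
      intro k
      rw [descPochhammer_eval_eq_descFactorial, Nat.descFactorial_eq_factorial_mul_choose]
      have : ((k.factorial : ℝ)) ≠ 0 := Nat.cast_ne_zero.mpr k.factorial_ne_zero
      push_cast
      field_simp
    rw [Finset.sum_congr rfl fun k _ => h2 k, ← h1]
    have : ((n.factorial : ℝ)) ≠ 0 := Nat.cast_ne_zero.mpr n.factorial_ne_zero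
    field_simp
  have := congrArg (Polynomial.eval x) key
  rw [hP, hQ] at this
  rw [this]
  congr 1
  exact Finset.sum_congr rfl fun k _ => by rw [descPochhammer_eval_eq_dfall]

lemma dfall_scale (lam : ℝ) (hlam : lam ≠ 0) (m : ℕ) :
    dfall lam 1 m = lam ^ m * dfall 1 lam⁻¹ m := by
  induction m with
  | zero => simp [dfall_zero]
  | succ m ih =>
      rw [dfall_succ, dfall_succ, ih, mul_one]
      have : lam * (1 - (m : ℝ) * lam⁻¹) = lam - m := by field_simp
      rw [pow_succ]
      calc lam ^ m * dfall 1 lam⁻¹ m * (lam - (m:ℝ))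
          = lam ^ m * dfall 1 lam⁻¹ m * (lam * (1 - (m : ℝ) * lam⁻¹)) := by rw [this]
        _ = lam ^ m * lam * (dfall 1 lam⁻¹ m * (1 - (m:ℝ) * lam⁻¹)) := by ring

/-- Theorem 4 (first part): `β_{n,λ} = ∑_{k=0}^n (λ^k (1)_{k+1,1/λ}/(k+1)) S_{2,λ}(n,k)`,
where the degenerate Bernoulli numbers `β_{n,λ} = b n` are defined by the
generating relation `hb`. -/
theorem degBernoulli_eq_sum_S2 (lam : ℝ) (hlam : lam ≠ 0) (b : ℕ → ℝ)
    (hb : (PowerSeries.X : PowerSeries ℝ) =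
      (degExpPS lam 1 - 1) * PowerSeries.mk (fun n => b n / n.factorial)) (n : ℕ) :
    b n = ∑ k ∈ Finset.range (n + 1),
      lam ^ k * dfall 1 lam⁻¹ (k + 1) / ((k : ℝ) + 1) * S2 lam n k := by
  set E : PowerSeries ℝ := degExpPS lam 1 - 1 with hEdef
  set c : ℕ → ℝ := fun k => dfall lam 1 (k+1) / (lam * (k+1).factorial) with hcdef
  set A : PowerSeries ℝ :=
    PowerSeries.mk (fun j => ∑ k ∈ Finset.range (j+1), c k * PowerSeries.coeff j (E ^ k))
    with hAdef
  -- Step 1: coeff n (E * A) = ∑_{k ≤ m} c k * coeff m (E^(k+1))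
  have h1 : ∀ m : ℕ, PowerSeries.coeff m (E * A)
      = ∑ k ∈ Finset.range (m+1), c k * PowerSeries.coeff m (E ^ (k+1)) := by
    intro m
    rw [PowerSeries.coeff_mul]
    have hinner : ∀ p ∈ Finset.HasAntidiagonal.antidiagonal m,
        PowerSeries.coeff p.1 E * PowerSeries.coeff p.2 A
        = ∑ k ∈ Finset.range (m+1),
            c k * (PowerSeries.coeff p.1 E * PowerSeries.coeff p.2 (E ^ k)) := by
      intro p hp
      rw [Finset.HasAntidiagonal.mem_antidiagonal] at hp
      have hA2 : PowerSeries.coeff p.2 A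
          = ∑ k ∈ Finset.range (m+1), c k * PowerSeries.coeff p.2 (E ^ k) := by
        rw [show PowerSeries.coeff p.2 A
            = ∑ k ∈ Finset.range (p.2+1), c k * PowerSeries.coeff p.2 (E ^ k) from by
          simp [hAdef]]
        refine Finset.sum_subset (by intro x hx; simp at hx ⊢; omega) ?_
        intro k _ hk2
        simp only [Finset.mem_range, not_lt] at hk2
        rw [coeff_E_pow_eq_zero lam k p.2 (by omega), mul_zero]
      rw [hA2, Finset.mul_sum]
      exact Finset.sum_congr rfl fun k _ => by ring
    rw [Finset.sum_congr rfl hinner, Finset.sum_comm]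
    refine Finset.sum_congr rfl fun k _ => ?_
    rw [← Finset.mul_sum, pow_succ', PowerSeries.coeff_mul]
  -- Step 2: that sum equals coeff m X
  have h2 : ∀ m : ℕ, ∑ k ∈ Finset.range (m+1), c k * PowerSeries.coeff m (E ^ (k+1))
      = PowerSeries.coeff m PowerSeries.X := by
    intro m
    have hstar := star lam m lam
    rw [Finset.sum_range_succ'] at hstar
    have hf0 : (((0:ℕ).factorial : ℝ)⁻¹ * PowerSeries.coeff m (E ^ 0)) * dfall lam 1 0
        = if m = 0 then 1 else 0 := by
      simp [dfall_zero, PowerSeries.coeff_one]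
    have hfs : ∀ i : ℕ, ((((i+1).factorial : ℝ))⁻¹
          * PowerSeries.coeff m (E ^ (i+1))) * dfall lam 1 (i+1)
        = lam * (c i * PowerSeries.coeff m (E ^ (i+1))) := by
      intro i
      have hfac : (((i+1).factorial : ℝ)) ≠ 0 := Nat.cast_ne_zero.mpr (i+1).factorial_ne_zero
      rw [hcdef]
      field_simp
    rw [hf0, Finset.sum_congr rfl fun i _ => hfs i, ← Finset.mul_sum] at hstar
    have htail : ∑ i ∈ Finset.range m, c i * PowerSeries.coeff m (E ^ (i+1))
        = ∑ k ∈ Finset.range (m+1), c k * PowerSeries.coeff m (E ^ (k+1)) := by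
      rw [Finset.sum_range_succ, coeff_E_pow_eq_zero lam (m+1) m (by omega), mul_zero, add_zero]
    rw [htail] at hstar
    set T := ∑ k ∈ Finset.range (m+1), c k * PowerSeries.coeff m (E ^ (k+1)) with hT
    rw [PowerSeries.coeff_X]
    have hfacm : ((m.factorial : ℝ)) ≠ 0 := Nat.cast_ne_zero.mpr m.factorial_ne_zero
    match m with
    | 0 =>
        rw [if_neg (by norm_num)]
        rw [dfall_zero] at hstar
        norm_num at hstar
        exact hstar.resolve_left hlam
    | 1 =>
        rw [if_pos rfl]
        rw [show dfall lam lam 1 = lam by rw [dfall_succ, dfall_zero]; push_cast; ring] at hstar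
        norm_num at hstar
        field_simp at hstar ⊢
        linarith
    | (m+2) =>
        rw [if_neg (by omega)]
        have hz : dfall lam lam (m+2) = 0 := by
          refine Finset.prod_eq_zero (Finset.mem_range.mpr (by omega : 1 < m + 2)) ?_
          push_cast; ring
        rw [hz] at hstar
        norm_num at hstar
        rcases hstar with h | h | h
        · exact absurd h (m+2).factorial_ne_zero
        · exact absurd h hlam
        · exact h
  -- Step 3: E * A = X = E * B, cancel
  have hEA : E * A = PowerSeries.X := by
    ext m; rw [h1 m, h2 m]
  have hEne : E ≠ 0 := by
    intro h
    have h1E : PowerSeries.coeff 1 E = 1 := by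
      rw [hEdef, map_sub, coeff_degExpPS, PowerSeries.coeff_one, dfall_succ, dfall_zero]
      norm_num
    rw [h] at h1E
    simp at h1E
  have hAB : A = PowerSeries.mk (fun n => b n / n.factorial) :=
    mul_left_cancel₀ hEne (hEA.trans hb)
  have hcoeff := congrArg (PowerSeries.coeff n) hAB
  simp only [hAdef, PowerSeries.coeff_mk] at hcoeff
  have hfacn : ((n.factorial : ℝ)) ≠ 0 := Nat.cast_ne_zero.mpr n.factorial_ne_zero
  have hbn : b n = (n.factorial : ℝ)
      * ∑ k ∈ Finset.range (n+1), c k * PowerSeries.coeff n (E ^ k) := by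
    rw [hcoeff]; field_simp
  rw [hbn, Finset.mul_sum]
  refine Finset.sum_congr rfl fun k _ => ?_
  rw [S2, hcdef]
  simp only []
  rw [dfall_scale lam hlam (k+1)]
  have hfk : ((k.factorial : ℝ)) ≠ 0 := Nat.cast_ne_zero.mpr k.factorial_ne_zero
  have hk1 : ((k : ℝ) + 1) ≠ 0 := by positivity
  rw [Nat.factorial_succ]
  push_cast
  field_simp
  ring
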